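/- arXiv:2210.11212 — 4 statements merged into one kernel-verified Lean document; each statement's English description precedes it below -/
import Mathlib

section
/- Let T > 0, κ > 2, a > 0 and b > 0. Suppose V : ℝ → ℝ is continuous on [0, ∞), V t ≥ 0 for all t ≥ 0, and for every t ≥ 0 with t ≠ T, V is differentiable at t with V'(t) ≤ −a·V(t) − b·μ_T(t)·V(t). Then V(t) ≤ ((T − t)/T)^(κ·b) · exp(−a·t) · V(0) for all t ∈ [0, T), and V(t) = 0 for all t ≥ T. -/
/-- Time-varying gain: `μ_T(t) = κ/(T − t)` for `0 ≤ t < T`, `0` otherwise. -/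
noncomputable def gain (κ T t : ℝ) : ℝ := if 0 ≤ t ∧ t < T then κ / (T - t) else 0

/-!
With `φ(t) = T^κ/(T - t)^κ` and `R(t) = a t + b log φ(t)` we have `R' = a + b μ_T` on `[0, T)`,
so `V · exp R` is nonincreasing there; since `exp (-R t) = ((T - t)/T)^(κ b) · exp (-a t)`,
this is the bound on `[0, T)`. As `κ b > 0` the bound tends to `0` at `T`, so `V T = 0` by
continuity, and on `[T, ∞)` the nonnegative function `V · exp (a t)` is nonincreasing from `0`.
-/

open Real Set

theorem antitoneOn_mul_exp_of_hasDerivAt_le {s : Set ℝ} (hs : Convex ℝ s) {V R r : ℝ → ℝ}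
    (hVc : ContinuousOn V s) (hRc : ContinuousOn R s)
    (hR : ∀ x ∈ interior s, HasDerivAt R (r x) x)
    (hV : ∀ x ∈ interior s, ∃ v, HasDerivAt V v x ∧ v ≤ -r x * V x) :
    AntitoneOn (fun x => V x * exp (R x)) s := by
  have hderiv : ∀ x ∈ interior s, ∃ v, v ≤ -r x * V x ∧
      HasDerivAt (fun x => V x * exp (R x)) (v * exp (R x) + V x * (exp (R x) * r x)) x := by
    intro x hx
    obtain ⟨v, hv, hvle⟩ := hV x hx
    exact ⟨v, hvle, hv.mul (hR x hx).exp⟩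
  refine antitoneOn_of_deriv_nonpos hs (hVc.mul (continuous_exp.comp_continuousOn hRc))
    (fun x hx => ?_) (fun x hx => ?_)
  · obtain ⟨v, -, hd⟩ := hderiv x hx
    exact hd.differentiableAt.differentiableWithinAt
  · obtain ⟨v, hvle, hd⟩ := hderiv x hx
    rw [hd.deriv, show v * exp (R x) + V x * (exp (R x) * r x) = (v + r x * V x) * exp (R x) by
      ring]
    exact mul_nonpos_of_nonpos_of_nonneg (by linarith) (exp_pos _).le

theorem le_exp_sub_mul_of_hasDerivAt_le {s : Set ℝ} (hs : Convex ℝ s) {V R r : ℝ → ℝ}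
    (hVc : ContinuousOn V s) (hRc : ContinuousOn R s)
    (hR : ∀ x ∈ interior s, HasDerivAt R (r x) x)
    (hV : ∀ x ∈ interior s, ∃ v, HasDerivAt V v x ∧ v ≤ -r x * V x)
    {x y : ℝ} (hx : x ∈ s) (hy : y ∈ s) (hxy : x ≤ y) :
    V y ≤ exp (R x - R y) * V x := by
  have h := antitoneOn_mul_exp_of_hasDerivAt_le hs hVc hRc hR hV hx hy hxy
  rw [exp_sub, div_mul_eq_mul_div, le_div_iff₀ (exp_pos _)]
  linarith

/-- `-κ log ((T - t) / T)` is `log φ(t)`, so this says `(log φ)' = μ_T` on `[0, T)`. -/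
theorem hasDerivAt_neg_mul_log_div (κ T : ℝ) {t : ℝ} (hT : 0 < T) (ht : t < T) :
    HasDerivAt (fun t => -κ * log ((T - t) / T)) (κ / (T - t)) t := by
  have hTt : T - t ≠ 0 := by linarith
  have hu : HasDerivAt (fun t => (T - t) / T) (-1 / T) t := by
    simpa using ((hasDerivAt_id t).const_sub T).div_const T
  refine ((hu.log (div_ne_zero hTt hT.ne')).const_mul (-κ)).congr_deriv ?_
  field_simp

theorem gain_of_mem_Ico {κ T t : ℝ} (ht : t ∈ Ico 0 T) : gain κ T t = κ / (T - t) :=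
  if_pos ht

theorem gain_of_le {κ T t : ℝ} (ht : T ≤ t) : gain κ T t = 0 :=
  if_neg fun h => (not_lt.2 ht) h.2

theorem le_rpow_mul_exp_of_hasDerivAt_le {T κ a b : ℝ} (hT : 0 < T) {V : ℝ → ℝ}
    (hVc : ContinuousOn V (Ico 0 T))
    (hV : ∀ t ∈ Ioo 0 T, ∃ v, HasDerivAt V v t ∧ v ≤ -a * V t - b * gain κ T t * V t)
    {t : ℝ} (ht : t ∈ Ico 0 T) :
    V t ≤ ((T - t) / T) ^ (κ * b) * exp (-a * t) * V 0 := by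
  have hR : ∀ t < T, HasDerivAt (fun t => a * t + b * (-κ * log ((T - t) / T)))
      (a + b * (κ / (T - t))) t := fun t ht =>
    ((hasDerivAt_id t).const_mul a).add ((hasDerivAt_neg_mul_log_div κ T hT ht).const_mul b)
      |>.congr_deriv (by simp)
  have hVR : ∀ x ∈ interior (Ico 0 T),
      ∃ v, HasDerivAt V v x ∧ v ≤ -(a + b * (κ / (T - x))) * V x := by
    rw [interior_Ico]
    intro x hx
    obtain ⟨v, hv, hvle⟩ := hV x hx
    rw [gain_of_mem_Ico (Ioo_subset_Ico_self hx)] at hvle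
    exact ⟨v, hv, by linarith⟩
  convert le_exp_sub_mul_of_hasDerivAt_le (convex_Ico 0 T) hVc
    (fun x hx => (hR x hx.2).continuousAt.continuousWithinAt)
    (fun x hx => hR x (interior_subset hx).2) hVR ⟨le_rfl, hT⟩ ht ht.1 using 2
  rw [rpow_def_of_pos (div_pos (by linarith [ht.2]) hT), ← exp_add]
  simp only [mul_zero, sub_zero, div_self hT.ne', log_one]
  congr 1; ring

theorem eq_zero_of_le_rpow_mul_exp {T c a C : ℝ} (hT : 0 < T) (hc : 0 < c) {V : ℝ → ℝ}
    (hVc : ContinuousWithinAt V (Ico 0 T) T) (hVT : 0 ≤ V T)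
    (hle : ∀ t ∈ Ico 0 T, V t ≤ ((T - t) / T) ^ c * exp (-a * t) * C) : V T = 0 := by
  have hbound : ContinuousAt (fun t => ((T - t) / T) ^ c * exp (-a * t) * C) T := by
    fun_prop (disch := positivity)
  refine le_antisymm ?_ hVT
  simpa [hc.ne'] using ContinuousWithinAt.closure_le (by simp [closure_Ico hT.ne, hT.le]) hVc
    hbound.continuousWithinAt hle

theorem eqOn_zero_of_hasDerivAt_le {T a : ℝ} {V : ℝ → ℝ} (hVc : ContinuousOn V (Ici T))
    (hVnn : ∀ t ∈ Ici T, 0 ≤ V t) (hVT : V T = 0)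
    (hV : ∀ t ∈ Ioi T, ∃ v, HasDerivAt V v t ∧ v ≤ -a * V t) : EqOn V 0 (Ici T) := by
  intro t ht
  refine le_antisymm ?_ (hVnn t ht)
  simpa [hVT] using le_exp_sub_mul_of_hasDerivAt_le (convex_Ici T) (R := (a * ·))
    (r := fun _ => a) hVc (by fun_prop) (fun x _ => by simpa using (hasDerivAt_id x).const_mul a)
    (by rwa [interior_Ici]) self_mem_Ici ht ht

theorem prescribed_time_lyapunov_general (T κ a b : ℝ) (hT : 0 < T) (hκ : 2 < κ)
    (hb : 0 < b)
    (V : ℝ → ℝ) (hVc : ContinuousOn V (Set.Ici (0 : ℝ)))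
    (hVnn : ∀ t : ℝ, 0 ≤ t → 0 ≤ V t)
    (hV' : ∀ t : ℝ, 0 ≤ t → t ≠ T →
      ∃ v : ℝ, HasDerivAt V v t ∧ v ≤ -a * V t - b * gain κ T t * V t) :
    (∀ t : ℝ, 0 ≤ t → t < T →
      V t ≤ ((T - t) / T) ^ (κ * b) * Real.exp (-a * t) * V 0) ∧
    (∀ t : ℝ, T ≤ t → V t = 0) := by
  have before : ∀ t ∈ Ico 0 T, V t ≤ ((T - t) / T) ^ (κ * b) * exp (-a * t) * V 0 :=
    fun t ht => le_rpow_mul_exp_of_hasDerivAt_le hT (hVc.mono Ico_subset_Ici_self)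
      (fun x hx => hV' x hx.1.le hx.2.ne) ht
  have hVT : V T = 0 := eq_zero_of_le_rpow_mul_exp hT (mul_pos (by linarith) hb)
    ((hVc T hT.le).mono Ico_subset_Ici_self) (hVnn T hT.le) before
  have after : EqOn V 0 (Ici T) := by
    refine eqOn_zero_of_hasDerivAt_le (a := a) (hVc.mono (Ici_subset_Ici.2 hT.le))
      (fun t ht => hVnn t (hT.le.trans ht)) hVT fun t ht => ?_
    obtain ⟨v, hv, hvle⟩ := hV' t (hT.le.trans ht.le) ht.ne'
    exact ⟨v, hv, by simpa [gain_of_le ht.le] using hvle⟩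
  exact ⟨fun t h0 hlt => before t ⟨h0, hlt⟩, fun t ht => after ht⟩

theorem prescribed_time_lyapunov (T κ a b : ℝ) (hT : 0 < T) (hκ : 2 < κ)
    (ha : 0 < a) (hb : 0 < b)
    (V : ℝ → ℝ) (hVc : ContinuousOn V (Set.Ici (0 : ℝ)))
    (hVnn : ∀ t : ℝ, 0 ≤ t → 0 ≤ V t)
    (hV' : ∀ t : ℝ, 0 ≤ t → t ≠ T →
      ∃ v : ℝ, HasDerivAt V v t ∧ v ≤ -a * V t - b * gain κ T t * V t) :
    (∀ t : ℝ, 0 ≤ t → t < T →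
      V t ≤ ((T - t) / T) ^ (κ * b) * Real.exp (-a * t) * V 0) ∧
    (∀ t : ℝ, T ≤ t → V t = 0) :=
  prescribed_time_lyapunov_general T κ a b hT hκ hb V hVc hVnn hV'
end

section
/- Suppose the digraph of W is strongly connected and structurally unbalanced (no gauge for the full node set exists). Then for every nominal prescribed-time trajectory X with parameters ρ1, ρ2 > 0 and prescribed time T1 > 0, X t k = 0 for all t ≥ T1 and all nodes k (prescribed-time stability within the preassigned time T1). -/
/-!
Because the digraph is strongly connected, the unsigned Laplacian `D − |W|` has a positive left
null vector `ξ`. With it, `V(x) = ∑ ξₖ xₖ²` satisfies `V' = −(ρ1 + ρ2 μ) Q(x)` along trajectories,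
where `Q(x) = ∑ ξₖ |Wₖₗ| (xₖ − sgn Wₖₗ · xₗ)² = 2 ∑ ξₖ xₖ (L x)ₖ`. A zero of `Q` away from the
origin would be a gauge after normalisation, so structural unbalance makes `Q` positive definite
and hence `Q ≥ c V` for some `c > 0`. On `[0, T1)` this gives `V' ≤ −(ρ2 κ c)/(T1 − t) · V`, so
`V(t) (T1 − t)^(−ρ2 κ c)` is nonincreasing and `V(t)` is squeezed to `0` as `t → T1`; after `T1`
the gain vanishes and `V` is nonincreasing.
-/

open Matrix

/-- Signed Laplacian `L = D − W` with `D k k = ∑_l |W k l|`. -/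
noncomputable def sLap {N : ℕ} (W : Matrix (Fin N) (Fin N) ℝ) : Matrix (Fin N) (Fin N) ℝ :=
  Matrix.diagonal (fun k => ∑ l, |W k l|) - W

/-- Node `i` reaches node `j`: reflexive–transitive closure of the edge relation
`E i j ↔ W j i ≠ 0`. -/
def Reaches {N : ℕ} (W : Matrix (Fin N) (Fin N) ℝ) : Fin N → Fin N → Prop :=
  Relation.ReflTransGen (fun i j => W j i ≠ 0)

def StronglyConnected {N : ℕ} (W : Matrix (Fin N) (Fin N) ℝ) : Prop :=
  ∀ i j, Reaches W i j

def QuasiStronglyConnected {N : ℕ} (W : Matrix (Fin N) (Fin N) ℝ) : Prop :=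
  ∃ r, ∀ j, Reaches W r j

def WeaklyConnected {N : ℕ} (W : Matrix (Fin N) (Fin N) ℝ) : Prop :=
  ∀ i j, Relation.ReflTransGen (fun a b => W b a ≠ 0 ∨ W a b ≠ 0) i j

/-- `k` is a leader: every node reaching `k` is reached back by `k`. -/
def IsLeader {N : ℕ} (W : Matrix (Fin N) (Fin N) ℝ) (k : Fin N) : Prop :=
  ∀ j, Reaches W j k → Reaches W k j

/-- Closed strong component of a leader `k`. -/
def CSC {N : ℕ} (W : Matrix (Fin N) (Fin N) ℝ) (k : Fin N) : Set (Fin N) :=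
  {j | Reaches W j k ∧ Reaches W k j}

/-- A gauge for a node set `S`. -/
def IsGauge {N : ℕ} (W : Matrix (Fin N) (Fin N) ℝ) (S : Set (Fin N)) (g : Fin N → ℝ) : Prop :=
  (∀ k ∈ S, g k = 1 ∨ g k = -1) ∧ ∀ k ∈ S, ∀ l ∈ S, g k * W k l * g l = |W k l|

/-- Nominal prescribed-time trajectory of the protocol (4). -/
def NominalTraj {N : ℕ} (W : Matrix (Fin N) (Fin N) ℝ) (κ ρ1 ρ2 T1 : ℝ)
    (X : ℝ → Fin N → ℝ) : Prop :=
  Continuous X ∧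
  ∀ t : ℝ, 0 ≤ t → t ≠ T1 →
    HasDerivAt X ((-(ρ1 + ρ2 * gain κ T1 t)) • (sLap W).mulVec (X t)) t

open Finset Filter Topology Set

section RowSums

variable {ι : Type*} [Fintype ι]

theorem exists_ne_zero_mul_rowSum_eq [DecidableEq ι] [Nonempty ι] (A : Matrix ι ι ℝ) :
    ∃ v : ι → ℝ, v ≠ 0 ∧ ∀ l, v l * ∑ m, A l m = ∑ k, v k * A k l := by
  set M := diagonal (fun k => ∑ m, A k m) - A
  have hM : M *ᵥ 1 = 0 := by
    ext k
    rw [sub_mulVec, Pi.sub_apply, mulVec_diagonal]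
    simp [mulVec, dotProduct]
  obtain ⟨v, hv0, hv⟩ :=
    exists_vecMul_eq_zero_iff.mpr (exists_mulVec_eq_zero_iff.mp ⟨1, one_ne_zero, hM⟩)
  refine ⟨v, hv0, fun l => ?_⟩
  have := congrFun hv l
  rw [vecMul_sub, Pi.sub_apply, vecMul_diagonal] at this
  exact sub_eq_zero.mp this

theorem abs_mul_rowSum_eq_of_nonneg {A : Matrix ι ι ℝ} (hA : ∀ k l, 0 ≤ A k l) {v : ι → ℝ}
    (hv : ∀ l, v l * ∑ m, A l m = ∑ k, v k * A k l) (l : ι) :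
    |v l| * ∑ m, A l m = ∑ k, |v k| * A k l := by
  have hle : ∀ l ∈ Finset.univ, |v l| * ∑ m, A l m ≤ ∑ k, |v k| * A k l := fun l _ => calc
    |v l| * ∑ m, A l m = |∑ k, v k * A k l| := by
      rw [← hv, abs_mul, abs_of_nonneg (sum_nonneg fun m _ => hA l m)]
    _ ≤ ∑ k, |v k * A k l| := abs_sum_le_sum_abs _ _
    _ = ∑ k, |v k| * A k l := by simp_rw [abs_mul, abs_of_nonneg (hA _ l)]
  have htotal : ∑ l, |v l| * ∑ m, A l m = ∑ l, ∑ k, |v k| * A k l := by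
    rw [sum_comm]
    simp_rw [mul_sum]
  exact (sum_eq_sum_iff_of_le hle).mp htotal l (mem_univ l)

end RowSums

theorem exists_pos_mul_norm_sq_le {E : Type*} [NormedAddCommGroup E] [NormedSpace ℝ E]
    [ProperSpace E] [Nontrivial E] {Q : E → ℝ} (hQ : Continuous Q)
    (hsmul : ∀ (r : ℝ) x, Q (r • x) = r ^ 2 * Q x) (hpos : ∀ x ≠ 0, 0 < Q x) :
    ∃ c > 0, ∀ x, c * ‖x‖ ^ 2 ≤ Q x := by
  obtain ⟨u, hu, hmin⟩ := (isCompact_sphere (0 : E) 1).exists_isMinOn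
    (NormedSpace.sphere_nonempty.mpr zero_le_one) hQ.continuousOn
  refine ⟨Q u, hpos u (ne_zero_of_mem_unit_sphere ⟨u, hu⟩), fun x => ?_⟩
  rcases eq_or_ne x 0 with rfl | hx
  · simpa using (hsmul 0 0).ge
  have hx' : ‖x‖⁻¹ • x ∈ Metric.sphere (0 : E) 1 := by simp [norm_smul, hx]
  calc Q u * ‖x‖ ^ 2 ≤ Q (‖x‖⁻¹ • x) * ‖x‖ ^ 2 := by gcongr; exact hmin hx'
    _ = Q x := by
      rw [hsmul, ← mul_rotate, ← mul_pow, mul_inv_cancel₀ (norm_ne_zero_iff.mpr hx), one_pow,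
        one_mul]

theorem le_zero_of_hasDerivAt_le_neg_div_mul {V V' : ℝ → ℝ} {a s T : ℝ} (ha : 0 < a)
    (hsT : s < T) (hV : ContinuousOn V (Icc s T)) (hV' : ∀ t ∈ Ioo s T, HasDerivAt V (V' t) t)
    (hle : ∀ t ∈ Ioo s T, V' t ≤ -(a / (T - t)) * V t) : V T ≤ 0 := by
  set φ := fun t => V t * (T - t) ^ (-a)
  have hφ : AntitoneOn φ (Ico s T) := by
    refine antitoneOn_of_hasDerivWithinAt_nonpos (convex_Ico s T)
      (f' := fun t => V' t * (T - t) ^ (-a) + V t * (-1 * -a * (T - t) ^ (-a - 1))) ?_ ?_ ?_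
    · refine (hV.mono Ico_subset_Icc_self).mul (ContinuousOn.rpow_const (by fun_prop) ?_)
      exact fun t ht => Or.inl (sub_pos.mpr ht.2).ne'
    · rw [interior_Ico]
      intro t ht
      exact ((hV' t ht).mul (((hasDerivAt_id t).const_sub T).rpow_const
        (Or.inl (sub_pos.mpr ht.2).ne'))).hasDerivWithinAt
    · rw [interior_Ico]
      intro t ht
      have hTt : 0 < T - t := sub_pos.mpr ht.2
      have hP : 0 ≤ (T - t) ^ (-a) := Real.rpow_nonneg hTt.le _
      rw [Real.rpow_sub_one hTt.ne']
      calc V' t * (T - t) ^ (-a) + V t * (-1 * -a * ((T - t) ^ (-a) / (T - t)))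
          ≤ -(a / (T - t)) * V t * (T - t) ^ (-a)
            + V t * (-1 * -a * ((T - t) ^ (-a) / (T - t))) := by
            gcongr; exact hle t ht
        _ = 0 := by ring
  have hbound : ∀ t ∈ Ico s T, V t ≤ φ s * (T - t) ^ a := fun t ht => calc
    V t = φ t * (T - t) ^ a := by
      simp only [φ, mul_assoc, ← Real.rpow_add (sub_pos.mpr ht.2), neg_add_cancel,
        Real.rpow_zero, mul_one]
    _ ≤ φ s * (T - t) ^ a := by
      gcongr
      · exact Real.rpow_nonneg (sub_pos.mpr ht.2).le _
      · exact hφ (left_mem_Ico.mpr hsT) ht ht.1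
  have hVlim : Tendsto V (𝓝[<] T) (𝓝 (V T)) := by
    rw [← nhdsWithin_Ioo_eq_nhdsLT hsT]
    exact (hV T (right_mem_Icc.mpr hsT.le)).mono Ioo_subset_Icc_self
  have hbound_lim : Tendsto (fun t => φ s * (T - t) ^ a) (𝓝[<] T) (𝓝 0) := by
    have : Tendsto (fun t => φ s * (T - t) ^ a) (𝓝 T) (𝓝 (φ s * (T - T) ^ a)) := by
      refine tendsto_const_nhds.mul ?_
      exact ((continuous_const.sub continuous_id).tendsto T).rpow_const (Or.inr ha.le)
    simpa [Real.zero_rpow ha.ne'] using this.mono_left nhdsWithin_le_nhds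
  exact le_of_tendsto_of_tendsto hVlim hbound_lim
    (eventually_of_mem (Ioo_mem_nhdsLT hsT) fun t ht => hbound t (Ioo_subset_Ico_self ht))

section SignedLaplacian

variable {N : ℕ} {W : Matrix (Fin N) (Fin N) ℝ}

theorem StronglyConnected.forall_of_edge_closed (hSC : StronglyConnected W)
    {p : Fin N → Prop} (hp : ∀ a b, W b a ≠ 0 → p a → p b) {i : Fin N} (hi : p i) (j : Fin N) :
    p j := by
  induction hSC i j with
  | refl => exact hi
  | tail _ hbc ih => exact hp _ _ hbc ih

theorem StronglyConnected.exists_pos_mul_rowSum_abs_eq [Nonempty (Fin N)]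
    (hSC : StronglyConnected W) :
    ∃ ξ : Fin N → ℝ, (∀ k, 0 < ξ k) ∧ ∀ l, ξ l * ∑ m, |W l m| = ∑ k, ξ k * |W k l| := by
  obtain ⟨v, hv0, hv⟩ := exists_ne_zero_mul_rowSum_eq (W.map abs)
  have hbal : ∀ l, |v l| * ∑ m, |W l m| = ∑ k, |v k| * |W k l| :=
    abs_mul_rowSum_eq_of_nonneg (A := W.map abs) (fun k l => abs_nonneg (W k l)) hv
  refine ⟨fun k => |v k|, fun k => abs_pos.mpr fun hk => hv0 (funext fun j => ?_), hbal⟩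
  -- balance at `a` is a sum of nonnegative terms, so a zero of `v` spreads along edges
  refine abs_eq_zero.mp (hSC.forall_of_edge_closed (p := fun j => |v j| = 0)
    (fun a b hba ha => ?_) (abs_eq_zero.mpr hk) j)
  have h0 : ∑ k, |v k| * |W k a| = 0 := by rw [← hbal a, ha, zero_mul]
  have := (sum_eq_zero_iff_of_nonneg fun k _ => by positivity).mp h0 b (mem_univ b)
  exact (mul_eq_zero.mp this).resolve_right (abs_ne_zero.mpr hba)

variable (W)

noncomputable def signedEnergy (ξ x : Fin N → ℝ) : ℝ :=
  ∑ k, ∑ l, ξ k * |W k l| * (x k - SignType.sign (W k l) * x l) ^ 2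

theorem abs_mul_sub_sign_mul_sq (w a b : ℝ) :
    |w| * (a - SignType.sign w * b) ^ 2 = |w| * a ^ 2 + |w| * b ^ 2 - 2 * w * a * b := by
  have h1 : |w| * SignType.sign w = w := abs_mul_sign w
  have h2 : |w| * (SignType.sign w : ℝ) ^ 2 = |w| := by rw [sq, ← mul_assoc, h1, self_mul_sign]
  linear_combination (-2 * a * b) * h1 + b ^ 2 * h2

theorem signedEnergy_eq_two_mul_sum {ξ : Fin N → ℝ}
    (hbal : ∀ l, ξ l * ∑ m, |W l m| = ∑ k, ξ k * |W k l|) (x : Fin N → ℝ) :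
    signedEnergy W ξ x = 2 * ∑ k, ξ k * x k * (sLap W *ᵥ x) k := by
  have hL : ∀ k, (sLap W *ᵥ x) k = (∑ m, |W k m|) * x k - ∑ l, W k l * x l := by
    intro k
    rw [sLap, sub_mulVec, Pi.sub_apply, mulVec_diagonal]
    rfl
  -- the balance condition moves the weight of the `x l ^ 2` terms from `l` to `k`
  have hswap : ∑ k, ∑ l, ξ k * (|W k l| * x l ^ 2) = ∑ k, ∑ l, ξ k * (|W k l| * x k ^ 2) := by
    rw [sum_comm]
    refine sum_congr rfl fun l _ => ?_
    calc ∑ k, ξ k * (|W k l| * x l ^ 2) = (∑ k, ξ k * |W k l|) * x l ^ 2 := by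
          rw [sum_mul]; exact sum_congr rfl fun k _ => by ring
      _ = ∑ m, ξ l * (|W l m| * x l ^ 2) := by
          rw [← hbal l, mul_sum, sum_mul]; exact sum_congr rfl fun m _ => by ring
  have hcross : ∑ k, ∑ l, ξ k * (2 * W k l * x k * x l)
      = 2 * ∑ k, ∑ l, ξ k * (W k l * x k * x l) := by
    simp only [mul_sum]; exact sum_congr rfl fun k _ => sum_congr rfl fun l _ => by ring
  have hQ : signedEnergy W ξ x = 2 * ∑ k, ∑ l, ξ k * (|W k l| * x k ^ 2)
      - 2 * ∑ k, ∑ l, ξ k * (W k l * x k * x l) := by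
    simp only [signedEnergy, mul_assoc (ξ _), abs_mul_sub_sign_mul_sq]
    simp only [mul_add, mul_sub, sum_add_distrib, sum_sub_distrib, hswap, hcross]
    ring
  have hLx : ∑ k, ξ k * x k * (sLap W *ᵥ x) k = ∑ k, ∑ l, ξ k * (|W k l| * x k ^ 2)
      - ∑ k, ∑ l, ξ k * (W k l * x k * x l) := by
    simp only [hL, ← sum_sub_distrib, mul_sum, sum_mul]
    exact sum_congr rfl fun k _ => sum_congr rfl fun l _ => by ring
  rw [hQ, hLx, mul_sub]

theorem signedEnergy_nonneg {ξ : Fin N → ℝ} (hξ : ∀ k, 0 ≤ ξ k) (x : Fin N → ℝ) :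
    0 ≤ signedEnergy W ξ x :=
  sum_nonneg fun k _ => sum_nonneg fun l _ => by have := hξ k; positivity

theorem signedEnergy_smul (ξ : Fin N → ℝ) (r : ℝ) (x : Fin N → ℝ) :
    signedEnergy W ξ (r • x) = r ^ 2 * signedEnergy W ξ x := by
  simp only [signedEnergy, mul_sum, Pi.smul_apply, smul_eq_mul]
  exact sum_congr rfl fun k _ => sum_congr rfl fun l _ => by ring

theorem continuous_signedEnergy (ξ : Fin N → ℝ) : Continuous (signedEnergy W ξ) := by
  unfold signedEnergy
  fun_prop

variable {W}

theorem StronglyConnected.exists_gauge_of_eq_sign_mul (hSC : StronglyConnected W)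
    {x : Fin N → ℝ} (hx : x ≠ 0) (h : ∀ k l, W k l ≠ 0 → x k = SignType.sign (W k l) * x l) :
    ∃ g, IsGauge W univ g := by
  obtain ⟨i, hi⟩ := Function.ne_iff.mp hx
  have habs : ∀ j, |x j| = |x i| := hSC.forall_of_edge_closed (p := fun j => |x j| = |x i|)
    (fun a b hba ha => by
      have hσ : |(SignType.sign (W b a) : ℝ)| = 1 := by
        rcases hba.lt_or_gt with hw | hw <;> simp [hw]
      rw [h b a hba, abs_mul, hσ, one_mul, ha]) rfl
  set a := |x i|
  have ha : 0 < a := abs_pos.mpr hi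
  refine ⟨fun k => x k / a, fun k _ => ?_, fun k _ l _ => ?_⟩
  · have : |x k / a| = 1 := by rw [abs_div, habs k, abs_of_pos ha, div_self ha.ne']
    exact (abs_eq zero_le_one).mp this
  · by_cases hW : W k l = 0
    · simp [hW]
    have hl : (x l / a) ^ 2 = 1 := by
      rw [div_pow, ← sq_abs (x l), habs l, div_self (by positivity)]
    calc x k / a * W k l * (x l / a)
        = SignType.sign (W k l) * W k l * (x l / a) ^ 2 := by rw [h k l hW]; ring
      _ = |W k l| := by rw [sign_mul_self, hl, mul_one]

theorem StronglyConnected.signedEnergy_pos (hSC : StronglyConnected W)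
    (hunb : ¬ ∃ g : Fin N → ℝ, IsGauge W univ g) {ξ : Fin N → ℝ} (hξ : ∀ k, 0 < ξ k)
    {x : Fin N → ℝ} (hx : x ≠ 0) : 0 < signedEnergy W ξ x := by
  refine (signedEnergy_nonneg W (fun k => (hξ k).le) x).lt_of_ne' fun h0 =>
    hunb (hSC.exists_gauge_of_eq_sign_mul hx fun k l hW => ?_)
  have hk := (sum_eq_zero_iff_of_nonneg fun k _ =>
    sum_nonneg fun l _ => by have := hξ k; positivity).mp h0 k (mem_univ k)
  have hkl := (sum_eq_zero_iff_of_nonneg fun l _ => by have := hξ k; positivity).mp hk l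
    (mem_univ l)
  simpa only [mul_eq_zero, (hξ k).ne', abs_eq_zero, hW, false_or, pow_eq_zero_iff two_ne_zero,
    sub_eq_zero] using hkl

theorem StronglyConnected.exists_pos_mul_weightedSq_le [Nonempty (Fin N)]
    (hSC : StronglyConnected W) (hunb : ¬ ∃ g : Fin N → ℝ, IsGauge W univ g)
    {ξ : Fin N → ℝ} (hξ : ∀ k, 0 < ξ k) :
    ∃ c > 0, ∀ x, c * ∑ k, ξ k * x k ^ 2 ≤ signedEnergy W ξ x := by
  obtain ⟨c, hc, hQ⟩ := exists_pos_mul_norm_sq_le (continuous_signedEnergy W ξ)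
    (signedEnergy_smul W ξ) fun x hx => hSC.signedEnergy_pos hunb hξ hx
  have hS : 0 < ∑ k, ξ k := sum_pos (fun k _ => hξ k) univ_nonempty
  refine ⟨c / ∑ k, ξ k, div_pos hc hS, fun x => ?_⟩
  have hV : ∑ k, ξ k * x k ^ 2 ≤ (∑ k, ξ k) * ‖x‖ ^ 2 := by
    rw [sum_mul]
    refine sum_le_sum fun k _ => mul_le_mul_of_nonneg_left ?_ (hξ k).le
    rw [← sq_abs, ← Real.norm_eq_abs]
    exact pow_le_pow_left₀ (norm_nonneg _) (norm_le_pi_norm x k) 2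
  calc c / (∑ k, ξ k) * ∑ k, ξ k * x k ^ 2 ≤ c / (∑ k, ξ k) * ((∑ k, ξ k) * ‖x‖ ^ 2) := by
        gcongr
    _ = c * ‖x‖ ^ 2 := by field_simp
    _ ≤ signedEnergy W ξ x := hQ x

end SignedLaplacian

section NominalTraj

variable {N : ℕ} {W : Matrix (Fin N) (Fin N) ℝ} {κ ρ1 ρ2 T1 : ℝ} {X : ℝ → Fin N → ℝ}
  {ξ : Fin N → ℝ}

theorem NominalTraj.hasDerivAt_weightedSq (hX : NominalTraj W κ ρ1 ρ2 T1 X)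
    (hbal : ∀ l, ξ l * ∑ m, |W l m| = ∑ k, ξ k * |W k l|) {t : ℝ} (ht : 0 ≤ t) (htT : t ≠ T1) :
    HasDerivAt (fun s => ∑ k, ξ k * X s k ^ 2)
      (-(ρ1 + ρ2 * gain κ T1 t) * signedEnergy W ξ (X t)) t := by
  have hk : ∀ k, HasDerivAt (fun s => X s k)
      (-(ρ1 + ρ2 * gain κ T1 t) * (sLap W *ᵥ X t) k) t := fun k =>
    hasDerivAt_pi.mp (hX.2 t ht htT) k
  refine (HasDerivAt.fun_sum fun k _ => ((hk k).pow 2).const_mul (ξ k)).congr_deriv ?_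
  rw [signedEnergy_eq_two_mul_sum W hbal, mul_sum, mul_sum]
  refine sum_congr rfl fun k _ => ?_
  push_cast
  ring

theorem NominalTraj.continuous_weightedSq (hX : NominalTraj W κ ρ1 ρ2 T1 X) :
    Continuous fun s => ∑ k, ξ k * X s k ^ 2 := by
  have := hX.1
  fun_prop

theorem NominalTraj.weightedSq_le_zero (hX : NominalTraj W κ ρ1 ρ2 T1 X)
    (hbal : ∀ l, ξ l * ∑ m, |W l m| = ∑ k, ξ k * |W k l|) (hξ : ∀ k, 0 ≤ ξ k) {c : ℝ}
    (hc : 0 < c) (hcoer : ∀ x, c * ∑ k, ξ k * x k ^ 2 ≤ signedEnergy W ξ x)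
    (hκ : 0 < κ) (hρ1 : 0 ≤ ρ1) (hρ2 : 0 < ρ2) (hT1 : 0 < T1) :
    ∑ k, ξ k * X T1 k ^ 2 ≤ 0 := by
  refine le_zero_of_hasDerivAt_le_neg_div_mul (a := ρ2 * κ * c) (by positivity) hT1
    hX.continuous_weightedSq.continuousOn
    (fun s hs => hX.hasDerivAt_weightedSq hbal hs.1.le hs.2.ne) fun s hs => ?_
  have hμ : 0 < κ / (T1 - s) := div_pos hκ (sub_pos.mpr hs.2)
  have hQ := signedEnergy_nonneg W hξ (X s)
  rw [gain, if_pos ⟨hs.1.le, hs.2⟩]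
  calc -(ρ1 + ρ2 * (κ / (T1 - s))) * signedEnergy W ξ (X s)
      ≤ -(ρ2 * (κ / (T1 - s))) * (c * ∑ k, ξ k * X s k ^ 2) := by
        nlinarith [hcoer (X s), mul_pos hρ2 hμ]
    _ = -(ρ2 * κ * c / (T1 - s)) * ∑ k, ξ k * X s k ^ 2 := by ring

theorem NominalTraj.antitoneOn_weightedSq (hX : NominalTraj W κ ρ1 ρ2 T1 X)
    (hbal : ∀ l, ξ l * ∑ m, |W l m| = ∑ k, ξ k * |W k l|) (hξ : ∀ k, 0 ≤ ξ k)
    (hρ1 : 0 ≤ ρ1) (hT1 : 0 ≤ T1) :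
    AntitoneOn (fun s => ∑ k, ξ k * X s k ^ 2) (Ici T1) := by
  refine antitoneOn_of_hasDerivWithinAt_nonpos (convex_Ici T1)
    (f' := fun s => -(ρ1 + ρ2 * gain κ T1 s) * signedEnergy W ξ (X s))
    hX.continuous_weightedSq.continuousOn (fun s hs => ?_) fun s hs => ?_
  all_goals rw [interior_Ici] at hs
  · exact (hX.hasDerivAt_weightedSq hbal (hT1.trans hs.out.le) hs.out.ne').hasDerivWithinAt
  · rw [gain, if_neg fun h => h.2.not_gt hs.out]
    have := signedEnergy_nonneg W hξ (X s)
    nlinarith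

end NominalTraj

theorem prescribed_time_stability_strong_unbalanced_general
    {N : ℕ} (W : Matrix (Fin N) (Fin N) ℝ)
    (hSC : StronglyConnected W)
    (hunb : ¬ ∃ g : Fin N → ℝ, IsGauge W Set.univ g)
    (κ ρ1 ρ2 T1 : ℝ) (hκ : 2 < κ) (hρ1 : 0 < ρ1) (hρ2 : 0 < ρ2) (hT1 : 0 < T1)
    (X : ℝ → Fin N → ℝ) (hX : NominalTraj W κ ρ1 ρ2 T1 X) :
    ∀ t : ℝ, T1 ≤ t → ∀ k, X t k = 0 := by
  intro t ht k
  have : Nonempty (Fin N) := ⟨k⟩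
  obtain ⟨ξ, hξ, hbal⟩ := hSC.exists_pos_mul_rowSum_abs_eq
  obtain ⟨c, hc, hcoer⟩ := hSC.exists_pos_mul_weightedSq_le hunb hξ
  have hξ' : ∀ k, 0 ≤ ξ k := fun k => (hξ k).le
  have hVT1 := hX.weightedSq_le_zero hbal hξ' hc hcoer (by linarith) hρ1.le hρ2 hT1
  have hVt : ∑ j, ξ j * X t j ^ 2 = 0 :=
    ((hX.antitoneOn_weightedSq hbal hξ' hρ1.le hT1.le self_mem_Ici ht ht).trans hVT1).antisymm
      (sum_nonneg fun j _ => by have := hξ' j; positivity)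
  simpa [(hξ k).ne'] using
    (sum_eq_zero_iff_of_nonneg fun j _ => by have := hξ' j; positivity).mp hVt k (mem_univ k)

theorem prescribed_time_stability_strong_unbalanced
    {N : ℕ} (hN : 2 ≤ N) (W : Matrix (Fin N) (Fin N) ℝ)
    (hdiag : ∀ k, W k k = 0)
    (hSC : StronglyConnected W)
    (hunb : ¬ ∃ g : Fin N → ℝ, IsGauge W Set.univ g)
    (κ ρ1 ρ2 T1 : ℝ) (hκ : 2 < κ) (hρ1 : 0 < ρ1) (hρ2 : 0 < ρ2) (hT1 : 0 < T1)
    (X : ℝ → Fin N → ℝ) (hX : NominalTraj W κ ρ1 ρ2 T1 X) :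
    ∀ t : ℝ, T1 ≤ t → ∀ k, X t k = 0 :=
  prescribed_time_stability_strong_unbalanced_general W hSC hunb κ ρ1 ρ2 T1 hκ hρ1 hρ2 hT1 X hX
end

section
/- Suppose the digraph of W is quasi-strongly connected and the follower set F is nonempty. Let L_F be the principal submatrix of the signed Laplacian L obtained by restricting rows and columns to F. Then: (1) every eigenvalue (in ℂ) of the comparison matrix 𝓜(L_F) has positive real part, and in particular L_F is invertible; (2) there exists a diagonal matrix Ξ indexed by F with strictly positive diagonal entries such that Ξ·L_F + L_Fᵀ·Ξ is positive definite. -/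
open Matrix

attribute [local instance] Classical.propDecidable

/-- Comparison matrix: diagonal `|B i i|`, off-diagonal `−|B i j|`. -/
noncomputable def compMatrix {n : Type*} [DecidableEq n] (B : Matrix n n ℝ) : Matrix n n ℝ :=
  fun i j => if i = j then |B i j| else -|B i j|

/-!
The comparison matrix `M` of the follower Laplacian `L_F` is a Z-matrix obeying a minimum
principle: if `M y ≥ 0` then `y ≥ 0`. Indeed, at a follower where `y` attains a negative minimum,
the row of `M y` forces every in-neighbour to be a follower with the same value of `y`; walking
back from that follower to the root, which is a leader, gives a contradiction. Hence `M` is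
invertible with `M⁻¹ ≥ 0`, and `ξ = M⁻ᵀ 1` is a positive vector with `ξᵀ M = 1ᵀ`, i.e. `L_F` is
strictly column diagonally dominant with weights `ξ`. Lévy–Desplanques then shows that `L_F` and
`z - M` for `re z ≤ 0` are nonsingular. Combined with the weak row dominance of `L_F`, the
weighted column dominance makes `Ξ L_F + L_Fᵀ Ξ` symmetric and strictly diagonally dominant, hence
positive definite.
-/

namespace Matrix

open Finset

variable {n : Type*} [DecidableEq n]

theorem compMatrix_apply_self (B : Matrix n n ℝ) (i : n) : compMatrix B i i = |B i i| :=
  if_pos rfl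

theorem compMatrix_apply_of_ne (B : Matrix n n ℝ) {i j : n} (h : i ≠ j) :
    compMatrix B i j = -|B i j| :=
  if_neg h

theorem abs_compMatrix_apply (B : Matrix n n ℝ) (i j : n) : |compMatrix B i j| = |B i j| := by
  unfold compMatrix
  split_ifs <;> simp

variable [Fintype n]

theorem det_ne_zero_of_sum_col_weighted_lt_diag {K : Type*} [RCLike K] (A : Matrix n n K)
    {ξ : n → ℝ} (hξ : ∀ i, 0 < ξ i)
    (h : ∀ i, ∑ j ∈ univ.erase i, ‖A j i‖ * ξ j < ‖A i i‖ * ξ i) : A.det ≠ 0 := by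
  have hnorm : ∀ i j, ‖(diagonal (fun k => (ξ k : K)) * A) i j‖ = ‖A i j‖ * ξ i := fun i j => by
    rw [diagonal_mul, norm_mul, RCLike.norm_ofReal, abs_of_pos (hξ i), mul_comm]
  have hdet := det_ne_zero_of_sum_col_lt_diag (A := diagonal (fun k => (ξ k : K)) * A)
    (by simpa only [hnorm] using h)
  exact right_ne_zero_of_mul (det_mul _ A ▸ hdet)

theorem re_pos_of_mem_spectrum_of_sum_col_weighted_lt_diag (A : Matrix n n ℝ)
    {ξ : n → ℝ} (hξ : ∀ i, 0 < ξ i)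
    (h : ∀ i, ∑ j ∈ univ.erase i, |A j i| * ξ j < A i i * ξ i) :
    ∀ z ∈ spectrum ℂ (A.map (algebraMap ℝ ℂ)), 0 < z.re := by
  intro z hz
  by_contra! hre
  set B := algebraMap ℂ (Matrix n n ℂ) z - A.map (algebraMap ℝ ℂ)
  have hoff : ∀ i j, i ≠ j → ‖B i j‖ = |A i j| := fun i j hij => by
    simp [B, algebraMap_matrix_apply, hij]
  have hdiag : ∀ i, A i i ≤ ‖B i i‖ := fun i => by
    have : A i i ≤ (A i i - z).re := by rw [Complex.sub_re, Complex.ofReal_re]; linarith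
    simpa [B, algebraMap_matrix_apply, norm_sub_rev] using this.trans (Complex.re_le_norm _)
  refine hz ((isUnit_iff_isUnit_det _).2 (det_ne_zero_of_sum_col_weighted_lt_diag B hξ
    fun i => ?_).isUnit)
  calc ∑ j ∈ univ.erase i, ‖B j i‖ * ξ j = ∑ j ∈ univ.erase i, |A j i| * ξ j :=
        sum_congr rfl fun j hj => by rw [hoff j i (ne_of_mem_erase hj)]
    _ < A i i * ξ i := h i
    _ ≤ ‖B i i‖ * ξ i := by gcongr; exacts [(hξ i).le, hdiag i]

theorem pos_of_mem_spectrum_of_sum_abs_lt_diag (A : Matrix n n ℝ)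
    (h : ∀ i, ∑ j ∈ univ.erase i, |A i j| < A i i) : ∀ t ∈ spectrum ℝ A, 0 < t := by
  intro t ht
  by_contra! hneg
  set B := algebraMap ℝ (Matrix n n ℝ) t - A
  have hoff : ∀ i j, i ≠ j → ‖B i j‖ = |A i j| := fun i j hij => by
    simp [B, algebraMap_matrix_apply, hij]
  have hdiag : ∀ i, A i i ≤ ‖B i i‖ := fun i => by
    simp only [B, sub_apply, algebraMap_matrix_apply, if_true, Algebra.algebraMap_self_apply,
      Real.norm_eq_abs]
    exact le_abs.2 (Or.inr (by linarith))
  refine ht ((isUnit_iff_isUnit_det _).2 (det_ne_zero_of_sum_row_lt_diag fun i => ?_).isUnit)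
  calc ∑ j ∈ univ.erase i, ‖B i j‖ = ∑ j ∈ univ.erase i, |A i j| :=
        sum_congr rfl fun j hj => by rw [hoff i j (ne_of_mem_erase hj).symm]
    _ < A i i := h i
    _ ≤ ‖B i i‖ := hdiag i

theorem posDef_of_isSymm_of_sum_abs_lt_diag {A : Matrix n n ℝ} (hA : A.IsSymm)
    (h : ∀ i, ∑ j ∈ univ.erase i, |A i j| < A i i) : A.PosDef := by
  have hH : A.IsHermitian := isHermitian_iff_isSymm.2 hA
  exact hH.posDef_iff_eigenvalues_pos.2 fun i =>
    pos_of_mem_spectrum_of_sum_abs_lt_diag A h _ (hH.eigenvalues_mem_spectrum_real i)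

/-- Monotone matrix in the sense of Collatz. -/
def IsMonotone (M : Matrix n n ℝ) : Prop :=
  ∀ y, 0 ≤ M *ᵥ y → 0 ≤ y

theorem IsMonotone.det_ne_zero {M : Matrix n n ℝ} (hM : M.IsMonotone) : M.det ≠ 0 := by
  rw [Ne, ← exists_mulVec_eq_zero_iff]
  rintro ⟨v, hv, hMv⟩
  refine hv (le_antisymm ?_ (hM v hMv.ge))
  simpa using hM (-v) (by rw [mulVec_neg, hMv, neg_zero])

theorem IsMonotone.inv_nonneg {M : Matrix n n ℝ} (hM : M.IsMonotone) (i j : n) :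
    0 ≤ M⁻¹ i j := by
  have hunit : IsUnit M.det := isUnit_iff_ne_zero.2 hM.det_ne_zero
  have hcol : M *ᵥ (M⁻¹ *ᵥ Pi.single j 1) = Pi.single j 1 := by
    rw [mulVec_mulVec, mul_nonsing_inv _ hunit, one_mulVec]
  have := hM _ (hcol ▸ Pi.single_nonneg.2 zero_le_one) i
  rwa [mulVec_single_one, col_apply] at this

theorem vecMul_apply_eq_sub_sum_of_offDiag_nonpos {M : Matrix n n ℝ}
    (hZ : ∀ i j, i ≠ j → M i j ≤ 0) (ξ : n → ℝ) (i : n) :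
    (ξ ᵥ* M) i = ξ i * M i i - ∑ j ∈ univ.erase i, |M j i| * ξ j := by
  rw [vecMul, dotProduct, ← add_sum_erase _ _ (mem_univ i), sub_eq_add_neg, ← sum_neg_distrib]
  congr 1
  refine sum_congr rfl fun j hj => ?_
  rw [abs_of_nonpos (hZ j i (ne_of_mem_erase hj)), mul_comm]
  ring

theorem IsMonotone.exists_pos_vecMul_eq_one {M : Matrix n n ℝ}
    (hZ : ∀ i j, i ≠ j → M i j ≤ 0) (hM : M.IsMonotone) :
    ∃ ξ : n → ℝ, (∀ i, 0 < ξ i) ∧ ξ ᵥ* M = 1 := by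
  have hunit : IsUnit M.det := isUnit_iff_ne_zero.2 hM.det_ne_zero
  set ξ := (1 : n → ℝ) ᵥ* M⁻¹
  have hξM : ξ ᵥ* M = 1 := by rw [vecMul_vecMul, nonsing_inv_mul _ hunit, vecMul_one]
  refine ⟨ξ, fun i => ?_, hξM⟩
  have hξ : ∀ j, 0 ≤ ξ j := fun j => sum_nonneg fun k _ => by simpa using hM.inv_nonneg k j
  have hdiag : 1 ≤ ξ i * M i i := by
    have := congrFun hξM i
    rw [vecMul_apply_eq_sub_sum_of_offDiag_nonpos hZ, Pi.one_apply] at this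
    linarith [sum_nonneg fun j (_ : j ∈ univ.erase i) => mul_nonneg (abs_nonneg (M j i)) (hξ j)]
  refine (hξ i).lt_of_ne fun h => ?_
  rw [← h, zero_mul] at hdiag
  norm_num at hdiag

theorem exists_pos_sum_col_weighted_lt_diag_of_isMonotone_compMatrix {B : Matrix n n ℝ}
    (hB : (compMatrix B).IsMonotone) :
    ∃ ξ : n → ℝ, (∀ i, 0 < ξ i) ∧ ∀ i, ∑ j ∈ univ.erase i, |B j i| * ξ j < |B i i| * ξ i := by
  have hZ : ∀ i j, i ≠ j → compMatrix B i j ≤ 0 := fun i j h => by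
    rw [compMatrix_apply_of_ne B h]
    exact neg_nonpos.2 (abs_nonneg _)
  obtain ⟨ξ, hξ, hξM⟩ := hB.exists_pos_vecMul_eq_one hZ
  refine ⟨ξ, hξ, fun i => ?_⟩
  have := congrFun hξM i
  rw [vecMul_apply_eq_sub_sum_of_offDiag_nonpos hZ, Pi.one_apply, compMatrix_apply_self] at this
  simp only [abs_compMatrix_apply] at this
  linarith

theorem posDef_diagonal_mul_add_transpose_mul (B : Matrix n n ℝ) {ξ : n → ℝ}
    (hξ : ∀ i, 0 < ξ i) (hrow : ∀ i, ∑ j ∈ univ.erase i, |B i j| ≤ B i i)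
    (hcol : ∀ i, ∑ j ∈ univ.erase i, |B j i| * ξ j < B i i * ξ i) :
    (diagonal ξ * B + Bᵀ * diagonal ξ).PosDef := by
  set S := diagonal ξ * B + Bᵀ * diagonal ξ
  have hS : ∀ i j, S i j = ξ i * B i j + B j i * ξ j := fun i j => by
    simp [S, diagonal_mul, mul_diagonal]
  refine posDef_of_isSymm_of_sum_abs_lt_diag ?_ fun i => ?_
  · simp [S, IsSymm, transpose_add, transpose_mul, add_comm]
  calc ∑ j ∈ univ.erase i, |S i j|
      ≤ ∑ j ∈ univ.erase i, (ξ i * |B i j| + |B j i| * ξ j) := sum_le_sum fun j _ => by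
        rw [hS]
        refine (abs_add_le _ _).trans_eq ?_
        rw [abs_mul, abs_mul, abs_of_pos (hξ i), abs_of_pos (hξ j)]
    _ = ξ i * ∑ j ∈ univ.erase i, |B i j| + ∑ j ∈ univ.erase i, |B j i| * ξ j := by
        rw [sum_add_distrib, mul_sum]
    _ < ξ i * B i i + B i i * ξ i :=
        add_lt_add_of_le_of_lt (mul_le_mul_of_nonneg_left (hrow i) (hξ i).le) (hcol i)
    _ = S i i := by rw [hS]

end Matrix

open Finset

theorem Finset.sum_subtype_eq_sum_dite {ι M : Type*} [Fintype ι] [AddCommMonoid M]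
    {p : ι → Prop} [DecidablePred p] (g : Subtype p → M) :
    ∑ j, g j = ∑ l, if h : p l then g ⟨l, h⟩ else 0 := by
  rw [sum_dite, sum_const_zero, add_zero]
  exact ((Equiv.subtypeEquivRight (by simp)).sum_comp g).symm

theorem Finset.sum_erase_subtype_eq_sum_erase_dite {ι M : Type*} [Fintype ι] [DecidableEq ι]
    [AddCommGroup M] {p : ι → Prop} [DecidablePred p] (g : Subtype p → M) (i : Subtype p) :
    ∑ j ∈ univ.erase i, g j = ∑ l ∈ univ.erase i.1, if h : p l then g ⟨l, h⟩ else 0 := by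
  rw [sum_erase_eq_sub (mem_univ _), sum_erase_eq_sub (mem_univ _), sum_subtype_eq_sum_dite,
    dif_pos i.2]

section Followers

variable {N : ℕ} {W : Matrix (Fin N) (Fin N) ℝ}

theorem sLap_apply_of_ne {i j : Fin N} (h : i ≠ j) : sLap W i j = -W i j := by
  simp [sLap, Matrix.diagonal_apply_ne _ h]

theorem sum_abs_erase_le_sLap_apply_self (i : Fin N) :
    ∑ l ∈ univ.erase i, |W i l| ≤ sLap W i i := by
  rw [sLap, Matrix.sub_apply, Matrix.diagonal_apply_eq, ← add_sum_erase _ _ (mem_univ i)]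
  linarith [le_abs_self (W i i)]

abbrev Follower (W : Matrix (Fin N) (Fin N) ℝ) : Type := {k : Fin N // ¬ IsLeader W k}

noncomputable abbrev followerLap (W : Matrix (Fin N) (Fin N) ℝ) :
    Matrix (Follower W) (Follower W) ℝ :=
  (sLap W).submatrix Subtype.val Subtype.val

theorem abs_followerLap_apply_of_ne {i j : Follower W} (h : i ≠ j) :
    |followerLap W i j| = |W i j| := by
  rw [followerLap, Matrix.submatrix_apply, sLap_apply_of_ne (Subtype.coe_ne_coe.2 h), abs_neg]

theorem sum_abs_followerLap_erase_le (i : Follower W) :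
    ∑ j ∈ univ.erase i, |followerLap W i j| ≤ followerLap W i i := by
  calc ∑ j ∈ univ.erase i, |followerLap W i j| = ∑ j ∈ univ.erase i, |W i j| :=
        sum_congr rfl fun j hj => abs_followerLap_apply_of_ne (ne_of_mem_erase hj).symm
    _ = ∑ l ∈ univ.erase i.1, if h : ¬ IsLeader W l then |W i l| else 0 :=
        sum_erase_subtype_eq_sum_erase_dite (fun j : Follower W => |W i j|) i
    _ ≤ ∑ l ∈ univ.erase i.1, |W i l| := sum_le_sum fun l _ => by split_ifs <;> simp
    _ ≤ followerLap W i i := sum_abs_erase_le_sLap_apply_self _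

theorem compMatrix_followerLap_mulVec_apply (y : Follower W → ℝ) (i : Follower W) :
    (compMatrix (followerLap W) *ᵥ y) i = |followerLap W i i| * y i -
      ∑ l ∈ univ.erase i.1, if h : ¬ IsLeader W l then |W i l| * y ⟨l, h⟩ else 0 := by
  rw [Matrix.mulVec, dotProduct, ← add_sum_erase _ _ (mem_univ i), compMatrix_apply_self,
    ← sum_erase_subtype_eq_sum_erase_dite (fun j : Follower W => |W i j| * y j) i,
    sub_eq_add_neg, ← sum_neg_distrib]
  refine congrArg _ (sum_congr rfl fun j hj => ?_)
  have hij := (ne_of_mem_erase hj).symm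
  rw [compMatrix_apply_of_ne _ hij, abs_followerLap_apply_of_ne hij, neg_mul]

theorem eq_min_of_in_neighbour {y : Follower W → ℝ} (hy : 0 ≤ compMatrix (followerLap W) *ᵥ y)
    {i : Follower W} (hmin : ∀ j, y i ≤ y j) (hneg : y i < 0) {l : Fin N} (hl : W i l ≠ 0) :
    ∃ h : ¬ IsLeader W l, y ⟨l, h⟩ = y i := by
  by_cases hli : l = i.1
  · subst hli
    exact ⟨i.2, rfl⟩
  -- `s l = |W i l| * (y i - ŷ l)`, with `ŷ` the extension of `y` by `0` to the leaders: each
  -- term is `≤ 0`, yet their sum dominates `(M *ᵥ y) i ≥ 0`.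
  set s : Fin N → ℝ := fun l =>
    |W i l| * y i - if h : ¬ IsLeader W l then |W i l| * y ⟨l, h⟩ else 0
  have hs : ∀ l, s l ≤ 0 := fun l => by
    by_cases h : IsLeader W l
    · simpa [s, h] using mul_nonpos_of_nonneg_of_nonpos (abs_nonneg (W i l)) hneg.le
    · simpa [s, h, ← mul_sub] using
        mul_nonpos_of_nonneg_of_nonpos (abs_nonneg (W i l)) (sub_nonpos.2 (hmin ⟨l, h⟩))
  have hsum : 0 ≤ ∑ l ∈ univ.erase i.1, s l := by
    have hdiag : |followerLap W i i| * y i ≤ (∑ l ∈ univ.erase i.1, |W i l|) * y i :=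
      mul_le_mul_of_nonpos_right
        ((sum_abs_erase_le_sLap_apply_self _).trans (le_abs_self _)) hneg.le
    have := hy i
    rw [Pi.zero_apply, compMatrix_followerLap_mulVec_apply] at this
    rw [sum_sub_distrib, ← sum_mul]
    linarith
  have hsl : s l = 0 := (sum_eq_zero_iff_of_nonpos fun l _ => hs l).1
    (le_antisymm (sum_nonpos fun l _ => hs l) hsum) l (mem_erase.2 ⟨hli, mem_univ _⟩)
  by_cases h : ¬ IsLeader W l
  · refine ⟨h, (mul_left_cancel₀ (abs_ne_zero.2 hl) ?_).symm⟩
    simpa [s, h, sub_eq_zero] using hsl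
  · simp only [s, h, dite_false, sub_zero] at hsl
    exact absurd hsl (mul_ne_zero (abs_ne_zero.2 hl) hneg.ne)

theorem isMonotone_compMatrix_followerLap (hQS : QuasiStronglyConnected W) :
    (compMatrix (followerLap W)).IsMonotone := by
  intro y hy
  by_contra hy'
  obtain ⟨i₀, hi₀⟩ : ∃ i, y i < 0 := by simpa [Pi.le_def] using hy'
  have : Nonempty (Follower W) := ⟨i₀⟩
  obtain ⟨i, hmin⟩ := Finite.exists_min y
  have hneg : y i < 0 := (hmin i₀).trans_lt hi₀
  obtain ⟨r, hr⟩ := hQS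
  have hr_min : ∃ h : ¬ IsLeader W r, y ⟨r, h⟩ = y i := by
    refine Relation.ReflTransGen.head_induction_on (hr i) ⟨i.2, rfl⟩ ?_
    rintro a c hca - ⟨hc, hyc⟩
    obtain ⟨ha, hya⟩ := eq_min_of_in_neighbour hy (i := ⟨c, hc⟩) (hyc ▸ hmin) (hyc ▸ hneg) hca
    exact ⟨ha, hya.trans hyc⟩
  exact hr_min.1 fun j _ => hr j

end Followers

theorem follower_laplacian_H_matrix_general
    {N : ℕ} (W : Matrix (Fin N) (Fin N) ℝ)
    (hQS : QuasiStronglyConnected W) :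
    (∀ z ∈ spectrum ℂ
        ((compMatrix ((sLap W).submatrix
          (Subtype.val : {k : Fin N // ¬ IsLeader W k} → Fin N) Subtype.val)).map
          (algebraMap ℝ ℂ)),
      0 < z.re) ∧
    IsUnit ((sLap W).submatrix
      (Subtype.val : {k : Fin N // ¬ IsLeader W k} → Fin N) Subtype.val).det ∧
    ∃ ξ : {k : Fin N // ¬ IsLeader W k} → ℝ, (∀ i, 0 < ξ i) ∧
      (Matrix.diagonal ξ *
          (sLap W).submatrix (Subtype.val : {k : Fin N // ¬ IsLeader W k} → Fin N) Subtype.val +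
        ((sLap W).submatrix
          (Subtype.val : {k : Fin N // ¬ IsLeader W k} → Fin N) Subtype.val)ᵀ *
          Matrix.diagonal ξ).PosDef := by
  obtain ⟨ξ, hξ, hdom⟩ :=
    exists_pos_sum_col_weighted_lt_diag_of_isMonotone_compMatrix
      (isMonotone_compMatrix_followerLap hQS)
  have hdiag (i : Follower W) : |followerLap W i i| = followerLap W i i :=
    abs_of_nonneg ((sum_nonneg fun _ _ => abs_nonneg _).trans (sum_abs_followerLap_erase_le i))
  refine ⟨re_pos_of_mem_spectrum_of_sum_col_weighted_lt_diag _ hξ ?_,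
    isUnit_iff_ne_zero.2 (det_ne_zero_of_sum_col_weighted_lt_diag _ hξ ?_),
    ξ, hξ, posDef_diagonal_mul_add_transpose_mul _ hξ sum_abs_followerLap_erase_le ?_⟩
  · simpa only [abs_compMatrix_apply, compMatrix_apply_self] using hdom
  · simpa only [Real.norm_eq_abs] using hdom
  · simpa only [hdiag] using hdom

theorem follower_laplacian_H_matrix
    {N : ℕ} (hN : 2 ≤ N) (W : Matrix (Fin N) (Fin N) ℝ)
    (hdiag : ∀ k, W k k = 0)
    (hQS : QuasiStronglyConnected W)
    (hF : ∃ k, ¬ IsLeader W k) :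
    (∀ z ∈ spectrum ℂ
        ((compMatrix ((sLap W).submatrix
          (Subtype.val : {k : Fin N // ¬ IsLeader W k} → Fin N) Subtype.val)).map
          (algebraMap ℝ ℂ)),
      0 < z.re) ∧
    IsUnit ((sLap W).submatrix
      (Subtype.val : {k : Fin N // ¬ IsLeader W k} → Fin N) Subtype.val).det ∧
    ∃ ξ : {k : Fin N // ¬ IsLeader W k} → ℝ, (∀ i, 0 < ξ i) ∧
      (Matrix.diagonal ξ *
          (sLap W).submatrix (Subtype.val : {k : Fin N // ¬ IsLeader W k} → Fin N) Subtype.val +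
        ((sLap W).submatrix
          (Subtype.val : {k : Fin N // ¬ IsLeader W k} → Fin N) Subtype.val)ᵀ *
          Matrix.diagonal ξ).PosDef :=
  follower_laplacian_H_matrix_general W hQS
end

section
/- Suppose the digraph of W is quasi-strongly connected and the leader set 𝓛 admits no gauge (the subgraph among leaders is structurally unbalanced). Then for every nominal prescribed-time trajectory X with parameters ρ1, ρ2 > 0 and prescribed time T1 > 0, X t k = 0 for all nodes k and all t ≥ T1 (prescribed-time stability within the preassigned time T1). -/
/-!
A kernel vector `x` of the signed Laplacian `L` has, at a node of maximal `|x k|`, a row equation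
forcing `x k * W k l * x l = |W k l| * |x k| ^ 2` for every `l`; so the maximal modulus spreads
backwards along edges, to a root reaching every node and from there to every leader, and on the
leaders `x / max |x|` is a gauge. Structural imbalance of the leaders thus makes `L` injective.
Since `L` is weakly diagonally dominant with nonnegative diagonal, Gershgorin puts every eigenvalue
at `0` or in the open right half-plane, so all eigenvalues have positive real part and
`exp (-s L) v → 0` as `s → ∞`.

On `[0, T1)` the protocol is a time change of `X' = -L X`: `X t = exp (-(φ t - φ 0) L) (X 0)` with
`φ t = ρ1 t - ρ2 κ log (T1 - t)`, and `φ t → ∞` as `t → T1`, whence `X T1 = 0` by continuity.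
After `T1` the gain vanishes and the solution of `X' = -ρ1 L X` through `0` stays at `0`.
-/

open Matrix

open Filter Topology NormedSpace Set

section SignedLaplacian

variable {N : ℕ} (W : Matrix (Fin N) (Fin N) ℝ)

theorem sLap_mulVec_apply (x : Fin N → ℝ) (k : Fin N) :
    (sLap W *ᵥ x) k = (∑ l, |W k l|) * x k - ∑ l, W k l * x l := by
  rw [sLap, sub_mulVec, Pi.sub_apply, mulVec_diagonal]
  rfl

variable {W} {x : Fin N → ℝ}

theorem mul_mul_eq_abs_mul_sq_of_sLap_mulVec_eq_zero (hx : sLap W *ᵥ x = 0) {k : Fin N}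
    (hk : ∀ l, |x l| ≤ |x k|) (l : Fin N) : x k * W k l * x l = |W k l| * |x k| ^ 2 := by
  have hle : ∀ l, x k * W k l * x l ≤ |W k l| * |x k| ^ 2 := fun l =>
    calc x k * W k l * x l ≤ |x k * W k l * x l| := le_abs_self _
      _ = |W k l| * (|x k| * |x l|) := by rw [abs_mul, abs_mul]; ring
      _ ≤ |W k l| * |x k| ^ 2 := by gcongr; nlinarith [hk l, abs_nonneg (x l)]
  have hsum : ∑ l, (|W k l| * |x k| ^ 2 - x k * W k l * x l) = 0 := by
    have h := congrFun hx k
    rw [sLap_mulVec_apply, Pi.zero_apply, sub_eq_zero] at h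
    rw [Finset.sum_sub_distrib, ← Finset.sum_mul, sq_abs]
    simp_rw [mul_assoc, ← Finset.mul_sum, ← h]
    ring
  have := (Finset.sum_eq_zero_iff_of_nonneg fun l _ => sub_nonneg.2 (hle l)).1 hsum l
    (Finset.mem_univ l)
  linarith

theorem abs_eq_of_sLap_mulVec_eq_zero_of_ne_zero (hx : sLap W *ᵥ x = 0) {k l : Fin N}
    (hk : ∀ l, |x l| ≤ |x k|) (hkl : W k l ≠ 0) : |x l| = |x k| := by
  have h := congrArg abs (mul_mul_eq_abs_mul_sq_of_sLap_mulVec_eq_zero hx hk l)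
  rw [abs_mul, abs_mul, abs_mul, abs_abs, abs_pow, abs_abs] at h
  refine le_antisymm (hk l) (not_lt.1 fun hlt => ?_)
  have hxk : 0 < |x k| := (abs_nonneg _).trans_lt hlt
  nlinarith [mul_pos (mul_pos hxk (abs_pos.2 hkl)) (sub_pos.2 hlt)]

theorem abs_eq_of_reaches_of_sLap_mulVec_eq_zero (hx : sLap W *ᵥ x = 0) {k : Fin N}
    (hk : ∀ l, |x l| ≤ |x k|) {j : Fin N} (hjk : Reaches W j k) : |x j| = |x k| := by
  induction hjk using Relation.ReflTransGen.head_induction_on with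
  | refl => rfl
  | head hW _ ih =>
    rw [← ih] at hk ⊢
    exact abs_eq_of_sLap_mulVec_eq_zero_of_ne_zero hx hk hW

theorem eq_zero_of_sLap_mulVec_eq_zero (hQS : QuasiStronglyConnected W)
    (hunb : ¬ ∃ g : Fin N → ℝ, IsGauge W {k | IsLeader W k} g) (hx : sLap W *ᵥ x = 0) :
    x = 0 := by
  by_contra hx0
  obtain ⟨i, hi⟩ := Function.ne_iff.1 hx0
  obtain ⟨k, -, hk⟩ :=
    Finset.exists_max_image Finset.univ (fun k => |x k|) ⟨i, Finset.mem_univ i⟩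
  replace hk : ∀ l, |x l| ≤ |x k| := fun l => hk l (Finset.mem_univ l)
  have hm : 0 < |x k| := (abs_pos.2 hi).trans_le (hk i)
  obtain ⟨r, hr⟩ := hQS
  have hleader : ∀ j, IsLeader W j → |x j| = |x k| := fun j hj =>
    abs_eq_of_reaches_of_sLap_mulVec_eq_zero hx hk ((hj r (hr j)).trans (hr k))
  refine hunb ⟨fun j => x j / |x k|, fun j hj => ?_, fun a ha b _ => ?_⟩
  · rcases abs_eq hm.le |>.1 (hleader j hj) with h | h <;> simp [h, hm.ne']
  · have hka : ∀ l, |x l| ≤ |x a| := hleader a ha ▸ hk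
    have h := mul_mul_eq_abs_mul_sq_of_sLap_mulVec_eq_zero hx hka b
    rw [hleader a ha] at h
    field_simp
    linear_combination h

theorem sum_abs_offDiag_le_sLap_diag (k : Fin N) :
    ∑ j ∈ Finset.univ.erase k, |sLap W k j| ≤ sLap W k k := by
  have hoff : ∀ j ∈ Finset.univ.erase k, |sLap W k j| = |W k j| := fun j hj => by
    simp [sLap, diagonal_apply_ne _ (Finset.ne_of_mem_erase hj).symm]
  rw [Finset.sum_congr rfl hoff, Finset.sum_erase_eq_sub (Finset.mem_univ k)]
  simp only [sLap, Matrix.sub_apply, diagonal_apply_eq]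
  linarith [le_abs_self (W k k)]

end SignedLaplacian

section Eigenvalues

variable {ι : Type*} [Fintype ι] [DecidableEq ι] {M : Matrix ι ι ℝ}

theorem eq_zero_or_re_pos_of_hasEigenvalue_map_ofReal
    (hM : ∀ k, ∑ j ∈ Finset.univ.erase k, |M k j| ≤ M k k) {μ : ℂ}
    (hμ : Module.End.HasEigenvalue (toLin' (M.map Complex.ofReal)) μ) : μ = 0 ∨ 0 < μ.re := by
  obtain ⟨k, hk⟩ := eigenvalue_mem_ball hμ
  simp only [map_apply, Complex.norm_real, Real.norm_eq_abs, Metric.mem_closedBall,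
    Complex.dist_eq] at hk
  have hsq := pow_le_pow_left₀ (norm_nonneg _) (hk.trans (hM k)) 2
  rw [Complex.sq_norm, Complex.normSq_apply] at hsq
  simp only [Complex.sub_re, Complex.ofReal_re, Complex.sub_im, Complex.ofReal_im,
    sub_zero] at hsq
  have hc : 0 ≤ M k k := (Finset.sum_nonneg fun j _ => abs_nonneg (M k j)).trans (hM k)
  refine or_iff_not_imp_right.2 fun hre => ?_
  have h : μ.re ^ 2 + μ.im ^ 2 ≤ 0 := by
    nlinarith [mul_nonneg hc (neg_nonneg.2 (not_lt.1 hre))]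
  exact Complex.ext (by rw [Complex.zero_re]; nlinarith [sq_nonneg μ.im])
    (by rw [Complex.zero_im]; nlinarith [sq_nonneg μ.re])

theorem not_hasEigenvalue_zero_map_ofReal (hM : ∀ x, M *ᵥ x = 0 → x = 0) :
    ¬ Module.End.HasEigenvalue (toLin' (M.map Complex.ofReal)) 0 := by
  intro h
  obtain ⟨v, hv⟩ := h.exists_hasEigenvector
  have hdet : (M.map Complex.ofReal).det = 0 :=
    exists_mulVec_eq_zero_iff.1 ⟨v, hv.2, by simpa using hv.apply_eq_smul⟩
  have hdetM : (M.det : ℂ) = (M.map Complex.ofReal).det := Complex.ofRealHom.map_det M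
  obtain ⟨x, hx0, hx⟩ :=
    exists_mulVec_eq_zero_iff.2 (Complex.ofReal_eq_zero.1 (hdetM.trans hdet))
  exact hx0 (hM x hx)

end Eigenvalues

section NilpotentExp

variable {𝕂 E : Type*} [RCLike 𝕂] [NormedAddCommGroup E] [NormedSpace 𝕂 E] [CompleteSpace E]

theorem exp_apply_eq_sum_of_pow_apply_eq_zero (B : E →L[𝕂] E) {w : E} {k : ℕ}
    (hk : (B ^ k) w = 0) : exp B w = ∑ n ∈ Finset.range k, (n.factorial : 𝕂)⁻¹ • (B ^ n) w := by
  refine ((exp_series_hasSum_exp' (𝕂 := 𝕂) B).mapL (ContinuousLinearMap.apply 𝕂 E w)).unique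
    (hasSum_sum_of_ne_finset_zero fun n hn => ?_)
  rw [Finset.mem_range, not_lt] at hn
  rw [ContinuousLinearMap.apply_apply, _root_.smul_apply, ← Nat.sub_add_cancel hn, pow_add,
    mul_apply_eq_comp, hk, map_zero, smul_zero]

end NilpotentExp

theorem Complex.tendsto_exp_neg_mul_mul_pow_atTop {μ : ℂ} (hμ : 0 < μ.re) (n : ℕ) :
    Tendsto (fun s : ℝ => Complex.exp (-s * μ) * (-s) ^ n) atTop (𝓝 0) := by
  rw [tendsto_zero_iff_norm_tendsto_zero]
  refine (tendsto_rpow_mul_exp_neg_mul_atTop_nhds_zero n μ.re hμ).congr' ?_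
  filter_upwards [eventually_ge_atTop 0] with s hs
  simp [Complex.norm_exp, abs_of_nonneg hs, mul_comm]

section ComplexDecay

variable {E : Type*} [NormedAddCommGroup E] [NormedSpace ℂ E] [CompleteSpace E]

theorem tendsto_exp_neg_smul_apply_of_mem_maxGenEigenspace (A : E →L[ℂ] E) {μ : ℂ}
    (hμ : 0 < μ.re) {w : E} (hw : w ∈ Module.End.maxGenEigenspace (A : E →ₗ[ℂ] E) μ) :
    Tendsto (fun s : ℝ => exp (-(s : ℂ) • A) w) atTop (𝓝 0) := by
  obtain ⟨k, hk⟩ := (Module.End.mem_maxGenEigenspace _ _ _).1 hw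
  set B := A - μ • (1 : E →L[ℂ] E)
  have hBk : (B ^ k) w = 0 := by
    rw [← hk, ← ContinuousLinearMap.coe_coe, ContinuousLinearMap.toLinearMap_pow]
    simp [B]
  have hexp : ∀ s : ℝ, exp (-(s : ℂ) • A) w = ∑ n ∈ Finset.range k,
      (Complex.exp (-s * μ) * (-s) ^ n * (n.factorial : ℂ)⁻¹) • (B ^ n) w := by
    intro s
    -- `exp_add_of_commute` is stated for normed `ℚ`-algebras
    let : NormedAlgebra ℚ (E →L[ℂ] E) := .restrictScalars ℚ ℂ _
    have hsplit : -(s : ℂ) • A = algebraMap ℂ _ (-s * μ) + -(s : ℂ) • B := by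
      rw [Algebra.algebraMap_eq_smul_one]; simp only [B]; module
    rw [hsplit, NormedSpace.exp_add_of_commute (Algebra.commutes _ _), ← algebraMap_exp_comm,
      ← Complex.exp_eq_exp_ℂ, Algebra.algebraMap_eq_smul_one, smul_one_mul, _root_.smul_apply,
      exp_apply_eq_sum_of_pow_apply_eq_zero _
        (by rw [smul_pow, _root_.smul_apply, hBk, smul_zero]), Finset.smul_sum]
    refine Finset.sum_congr rfl fun n _ => ?_
    rw [smul_pow, _root_.smul_apply, smul_smul, smul_smul]
    ring_nf
  simp_rw [hexp]
  simpa using tendsto_finsetSum (Finset.range k) fun n _ =>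
    ((Complex.tendsto_exp_neg_mul_mul_pow_atTop hμ n).mul_const _).smul_const ((B ^ n) w)

theorem tendsto_exp_neg_smul_apply_nhds_zero [FiniteDimensional ℂ E] (A : E →L[ℂ] E)
    (hA : ∀ μ, Module.End.HasEigenvalue (A : E →ₗ[ℂ] E) μ → 0 < μ.re) (v : E) :
    Tendsto (fun s : ℝ => exp (-(s : ℂ) • A) v) atTop (𝓝 0) := by
  have hv : v ∈ ⨆ μ, Module.End.maxGenEigenspace (A : E →ₗ[ℂ] E) μ := by
    rw [Module.End.iSup_maxGenEigenspace_eq_top]; trivial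
  refine Submodule.iSup_induction _
    (motive := fun v => Tendsto (fun s : ℝ => exp (-(s : ℂ) • A) v) atTop (𝓝 0)) hv
    (fun μ w hw => ?_) (by simp) (fun x y hx hy => by simpa using hx.add hy)
  rcases eq_or_ne w 0 with rfl | hw0
  · simp
  · exact tendsto_exp_neg_smul_apply_of_mem_maxGenEigenspace A
      (hA μ ((Module.End.HasUnifEigenvector.hasUnifEigenvalue ⟨hw, hw0⟩).lt zero_lt_one)) hw

end ComplexDecay

section MatrixOperator

variable {𝕜 ι : Type*} [RCLike 𝕜] [Fintype ι] [DecidableEq ι]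

noncomputable def mulVecCLM (M : Matrix ι ι 𝕜) : (ι → 𝕜) →L[𝕜] (ι → 𝕜) :=
  LinearMap.toContinuousLinearMap (toLin' M)

@[simp]
theorem mulVecCLM_apply (M : Matrix ι ι 𝕜) (v : ι → 𝕜) : mulVecCLM M v = M *ᵥ v := rfl

theorem mulVecCLM_smul (c : 𝕜) (M : Matrix ι ι 𝕜) : mulVecCLM (c • M) = c • mulVecCLM M := by
  ext1 v
  simp [smul_mulVec]

-- `map_exp` needs some Banach-algebra norm on matrices; which one is immaterial.
attribute [local instance] Matrix.linftyOpNormedRing Matrix.linftyOpNormedAlgebra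

theorem mulVecCLM_exp (M : Matrix ι ι 𝕜) : mulVecCLM (exp M) = exp (mulVecCLM M) :=
  let Φ := Matrix.toLinAlgEquiv'.trans (Module.End.toContinuousLinearMap (ι → 𝕜))
  map_exp Φ (LinearMap.continuous_of_finiteDimensional Φ.toLinearMap) M

theorem exp_map_ofReal (M : Matrix ι ι ℝ) :
    (exp M).map Complex.ofReal = exp (M.map Complex.ofReal) :=
  map_exp Complex.ofRealHom.mapMatrix (continuous_id.matrix_map Complex.continuous_ofReal) M

theorem tendsto_exp_neg_smul_mulVecCLM_apply {M : Matrix ι ι ℝ}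
    (hM : ∀ μ, Module.End.HasEigenvalue (toLin' (M.map Complex.ofReal)) μ → 0 < μ.re)
    (v : ι → ℝ) : Tendsto (fun s : ℝ => exp ((-s) • mulVecCLM M) v) atTop (𝓝 0) := by
  have hC := tendsto_exp_neg_smul_apply_nhds_zero (mulVecCLM (M.map Complex.ofReal))
    hM (fun k => (v k : ℂ))
  have hcomplexify : ∀ (s : ℝ) k, ((exp ((-s) • mulVecCLM M) v k : ℝ) : ℂ) =
      exp (-(s : ℂ) • mulVecCLM (M.map Complex.ofReal)) (fun k => (v k : ℂ)) k := by
    intro s k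
    rw [← mulVecCLM_smul, ← mulVecCLM_exp, ← mulVecCLM_smul, ← mulVecCLM_exp, mulVecCLM_apply,
      mulVecCLM_apply, ← Complex.ofRealHom_eq_coe, RingHom.map_mulVec,
      show ⇑Complex.ofRealHom = Complex.ofReal from rfl, exp_map_ofReal]
    congr 3
    ext i j
    simp
  rw [tendsto_pi_nhds] at hC ⊢
  intro k
  have := (Complex.continuous_re.tendsto 0).comp (hC k)
  rw [Complex.zero_re] at this
  rw [Pi.zero_apply]
  refine this.congr fun s => ?_
  rw [Function.comp_apply, ← hcomplexify, Complex.ofReal_re]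

end MatrixOperator

section LinearODE

variable {E : Type*} [NormedAddCommGroup E] [NormedSpace ℝ E]

theorem eq_of_continuousOn_Icc_of_hasDerivAt_zero {f : ℝ → E} {a b : ℝ} (hab : a ≤ b)
    (hc : ContinuousOn f (Icc a b)) (hd : ∀ t ∈ Ioo a b, HasDerivAt f 0 t) : f b = f a := by
  rcases hab.eq_or_lt with rfl | hab
  · rfl
  have h : ∀ a' ∈ Ioo a b, f b = f a' := fun a' ha' =>
    constant_of_has_deriv_right_zero (hc.mono (Icc_subset_Icc ha'.1.le le_rfl))
      (fun t ht => (hd t ⟨ha'.1.trans_le ht.1, ht.2⟩).hasDerivWithinAt) b ⟨ha'.2.le, le_rfl⟩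
  have := left_nhdsWithin_Ioo_neBot hab
  refine tendsto_nhds_unique (tendsto_const_nhds.congr' ?_)
    ((hc a ⟨le_rfl, hab.le⟩).mono Ioo_subset_Icc_self)
  filter_upwards [self_mem_nhdsWithin] with a' ha' using h a' ha'

variable [CompleteSpace E]

theorem eq_exp_smul_apply_of_hasDerivAt (A : E →L[ℝ] E) {φ φ' : ℝ → ℝ} {X : ℝ → E} {a b : ℝ}
    (hab : a ≤ b) (hφ : ContinuousOn φ (Icc a b)) (hφ' : ∀ t ∈ Ioo a b, HasDerivAt φ (φ' t) t)
    (hX : ContinuousOn X (Icc a b)) (hX' : ∀ t ∈ Ioo a b, HasDerivAt X (-φ' t • A (X t)) t) :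
    X b = exp ((φ a - φ b) • A) (X a) := by
  let : NormedAlgebra ℚ (E →L[ℝ] E) := .restrictScalars ℚ ℝ _
  have hexp_add : ∀ s t : ℝ, exp (s • A) * exp (t • A) = exp ((s + t) • A) := fun s t => by
    rw [add_smul, exp_add_of_commute (((Commute.refl A).smul_left s).smul_right t)]
  have hconst : exp (φ b • A) (X b) = exp (φ a • A) (X a) := by
    refine eq_of_continuousOn_Icc_of_hasDerivAt_zero hab
      (ContinuousOn.clm_apply (f := fun t => exp (φ t • A))
        (exp_continuous.comp_continuousOn (hφ.smul continuousOn_const)) hX)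
      fun t ht => ?_
    refine (((hasDerivAt_exp_smul_const A (φ t)).scomp t (hφ' t ht)).clm_apply
      (hX' t ht)).congr_deriv ?_
    rw [_root_.smul_apply, mul_apply_eq_comp, Function.comp_apply, map_smul, neg_smul,
      add_neg_cancel]
  calc X b = exp ((-φ b + φ b) • A) (X b) := by simp
    _ = exp (-φ b • A) (exp (φ b • A) (X b)) := by rw [← hexp_add]; rfl
    _ = exp ((φ a - φ b) • A) (X a) := by
      rw [hconst, ← mul_apply_eq_comp, hexp_add, neg_add_eq_sub]

end LinearODE

theorem tendsto_mul_sub_mul_log_sub_nhdsLT (ρ : ℝ) {c : ℝ} (hc : 0 < c) (T : ℝ) :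
    Tendsto (fun t => ρ * t - c * Real.log (T - t)) (𝓝[<] T) atTop := by
  have hT : Tendsto (fun t => T - t) (𝓝[<] T) (𝓝[>] 0) :=
    tendsto_nhdsWithin_of_tendsto_nhds_of_eventually_within _
      (((continuous_const.sub continuous_id).tendsto' T 0 (sub_self T)).mono_left
        nhdsWithin_le_nhds)
      (eventually_nhdsWithin_of_forall fun t ht => mem_Ioi.2 (sub_pos.2 ht))
  have hlog :=
    (tendsto_neg_atBot_atTop.comp (Real.tendsto_log_nhdsGT_zero.comp hT)).const_mul_atTop hc
  simpa [sub_eq_add_neg] using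
    (((continuous_const_mul ρ).tendsto T).mono_left nhdsWithin_le_nhds).add_atTop hlog

section PrescribedTime

variable {E : Type*} [NormedAddCommGroup E] [NormedSpace ℝ E] [CompleteSpace E] (A : E →L[ℝ] E)

theorem eq_zero_at_prescribed_time
    (hA : ∀ v, Tendsto (fun s : ℝ => exp ((-s) • A) v) atTop (𝓝 0))
    {κ ρ1 ρ2 T1 : ℝ} (hκ : 0 < κ) (hρ2 : 0 < ρ2) (hT1 : 0 < T1) {X : ℝ → E}
    (hXc : ContinuousOn X (Icc 0 T1))
    (hX' : ∀ t ∈ Ioo 0 T1, HasDerivAt X (-(ρ1 + ρ2 * gain κ T1 t) • A (X t)) t) : X T1 = 0 := by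
  set φ : ℝ → ℝ := fun t => ρ1 * t - ρ2 * κ * Real.log (T1 - t)
  have hφ' : ∀ t ∈ Ioo 0 T1, HasDerivAt φ (ρ1 + ρ2 * gain κ T1 t) t := fun t ht => by
    have hlog := ((hasDerivAt_id' t).const_sub T1).log (sub_pos.2 ht.2).ne'
    refine (((hasDerivAt_id' t).const_mul ρ1).sub (hlog.const_mul (ρ2 * κ))).congr_deriv ?_
    rw [show gain κ T1 t = κ / (T1 - t) from if_pos ⟨ht.1.le, ht.2⟩]
    field_simp
    ring
  have hsol : ∀ b ∈ Ico 0 T1, X b = exp ((φ 0 - φ b) • A) (X 0) := fun b hb =>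
    eq_exp_smul_apply_of_hasDerivAt A hb.1
      (by fun_prop (disch := exact fun t ht => (sub_pos.2 (ht.2.trans_lt hb.2)).ne'))
      (fun t ht => hφ' t ⟨ht.1, ht.2.trans hb.2⟩) (hXc.mono (Icc_subset_Icc_right hb.2.le))
      (fun t ht => hX' t ⟨ht.1, ht.2.trans hb.2⟩)
  have hlim : Tendsto X (𝓝[<] T1) (𝓝 0) := by
    refine ((hA (X 0)).comp (tendsto_atTop_add_const_right _ (-φ 0)
      (tendsto_mul_sub_mul_log_sub_nhdsLT ρ1 (c := ρ2 * κ) (by positivity) T1))).congr' ?_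
    filter_upwards [Ioo_mem_nhdsLT hT1] with b hb
    rw [hsol b ⟨hb.1.le, hb.2⟩, Function.comp_apply]
    congr 3
    simp only [φ]
    ring
  exact tendsto_nhds_unique
    ((hXc T1 ⟨hT1.le, le_rfl⟩).mono_of_mem_nhdsWithin (Icc_mem_nhdsLT hT1)) hlim

theorem eq_zero_of_hasDerivAt_smul_of_eq_zero {ρ T : ℝ} {X : ℝ → E}
    (hXc : ContinuousOn X (Ici T)) (hX' : ∀ t ∈ Ioi T, HasDerivAt X (-ρ • A (X t)) t)
    (hT : X T = 0) {t : ℝ} (ht : T ≤ t) : X t = 0 := by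
  rw [eq_exp_smul_apply_of_hasDerivAt A (φ := fun s => ρ * s) (φ' := fun _ => ρ) ht
    (continuous_const.mul continuous_id).continuousOn
    (fun s _ => by simpa using (hasDerivAt_id s).const_mul ρ) (hXc.mono Icc_subset_Ici_self)
    (fun s hs => hX' s hs.1), hT, map_zero]

end PrescribedTime

theorem re_pos_of_hasEigenvalue_sLap {N : ℕ} {W : Matrix (Fin N) (Fin N) ℝ}
    (hQS : QuasiStronglyConnected W) (hunb : ¬ ∃ g : Fin N → ℝ, IsGauge W {k | IsLeader W k} g)
    {μ : ℂ} (hμ : Module.End.HasEigenvalue (toLin' ((sLap W).map Complex.ofReal)) μ) :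
    0 < μ.re :=
  (eq_zero_or_re_pos_of_hasEigenvalue_map_ofReal sum_abs_offDiag_le_sLap_diag hμ).resolve_left
    fun h => not_hasEigenvalue_zero_map_ofReal
      (fun _ => eq_zero_of_sLap_mulVec_eq_zero hQS hunb) (h ▸ hμ)

theorem prescribed_time_stability_quasi_unbalanced_leaders_general
    {N : ℕ} (W : Matrix (Fin N) (Fin N) ℝ)
    (hQS : QuasiStronglyConnected W)
    (hunb : ¬ ∃ g : Fin N → ℝ, IsGauge W {k | IsLeader W k} g)
    (κ ρ1 ρ2 T1 : ℝ) (hκ : 2 < κ) (hρ2 : 0 < ρ2) (hT1 : 0 < T1)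
    (X : ℝ → Fin N → ℝ) (hX : NominalTraj W κ ρ1 ρ2 T1 X) :
    ∀ t : ℝ, T1 ≤ t → ∀ k, X t k = 0 := by
  obtain ⟨hXc, hX'⟩ := hX
  have hdecay :=
    tendsto_exp_neg_smul_mulVecCLM_apply fun _ => re_pos_of_hasEigenvalue_sLap hQS hunb
  have hXT1 : X T1 = 0 := eq_zero_at_prescribed_time (mulVecCLM (sLap W)) hdecay (by linarith)
    hρ2 hT1 hXc.continuousOn fun t ht => hX' t ht.1.le ht.2.ne
  have hgain : ∀ s ∈ Ioi T1, gain κ T1 s = 0 := fun s hs => if_neg fun h => h.2.not_gt hs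
  intro t ht k
  rw [eq_zero_of_hasDerivAt_smul_of_eq_zero (mulVecCLM (sLap W)) (ρ := ρ1) hXc.continuousOn
    (fun s hs => by simpa [hgain s hs] using hX' s (hT1.le.trans hs.le) hs.ne') hXT1 ht,
    Pi.zero_apply]

theorem prescribed_time_stability_quasi_unbalanced_leaders
    {N : ℕ} (hN : 2 ≤ N) (W : Matrix (Fin N) (Fin N) ℝ)
    (hdiag : ∀ k, W k k = 0)
    (hQS : QuasiStronglyConnected W)
    (hunb : ¬ ∃ g : Fin N → ℝ, IsGauge W {k | IsLeader W k} g)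
    (κ ρ1 ρ2 T1 : ℝ) (hκ : 2 < κ) (hρ1 : 0 < ρ1) (hρ2 : 0 < ρ2) (hT1 : 0 < T1)
    (X : ℝ → Fin N → ℝ) (hX : NominalTraj W κ ρ1 ρ2 T1 X) :
    ∀ t : ℝ, T1 ≤ t → ∀ k, X t k = 0 :=
  prescribed_time_stability_quasi_unbalanced_leaders_general W hQS hunb κ ρ1 ρ2 T1 hκ hρ2 hT1 X hX
end
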